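/- For every r ≥ 1 and every permutation π of {0,…,2^r − 1}, there exists a setting of the switches of an r-Benes network that realises π; equivalently, every permutation of [2^r] factors as τ_in ∘ (σ_0 ⊕ σ_1) ∘ τ_out, where τ_in, τ_out are permutations obtained from 2^{r−1} independent binary switches (each switch i either fixes or swaps inputs i and i + 2^{r−1}), and σ_0, σ_1 are arbitrary permutations of [2^{r−1}] acting on the first and second halves respectively. -/

import Mathlib

/-!
The two involutions `p` (the switch pairing `x ↔ x ± N`) and `π⁻¹ p π` are fixed-point free,
so the graph they span is a union of even cycles and admits a 2-colouring `c` in which both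
pairings join opposite colours. Setting the output switches so that `x` enters the half `c x`,
and the input switches so that `π x` leaves from the half `c x`, makes the remaining
permutation preserve both halves, i.e. it is `σ₀ ⊕ σ₁`.
-/

/-- The outer layer of switches of a Benes network: input `x` is paired with
`x + N` (resp. `x - N`), and the switch `s` either fixes or swaps each pair. -/
def switchLayer (N : ℕ) (s : Fin N → Bool) : Fin (2 * N) → Fin (2 * N) := fun x =>
  if h : x.val < N then
    if s ⟨x.val, h⟩ then ⟨x.val + N, by omega⟩ else x
  else
    if s ⟨x.val - N, by have := x.isLt; omega⟩ then
      ⟨x.val - N, by have := x.isLt; omega⟩ else x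

/-- The middle layer `σ₀ ⊕ σ₁`: `σ₀` permutes the first half `{0,…,N-1}` and
`σ₁` permutes the second half `{N,…,2N-1}`. -/
def middleLayer (N : ℕ) (σ₀ σ₁ : Equiv.Perm (Fin N)) : Fin (2 * N) → Fin (2 * N) := fun x =>
  if h : x.val < N then ⟨(σ₀ ⟨x.val, h⟩).val, by have := (σ₀ ⟨x.val, h⟩).isLt; omega⟩
  else ⟨(σ₁ ⟨x.val - N, by have := x.isLt; omega⟩).val + N,
    by have := (σ₁ ⟨x.val - N, by have := x.isLt; omega⟩).isLt; omega⟩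

namespace Equiv.Perm

variable {α : Type*}

/-- Conjugation by `a` inverts `g = b * a`, so `a x = g ^ k x` would give a fixed point of `a`
(`k` even) or of `b` (`k` odd). -/
theorem not_sameCycle_apply_of_involutions {a b : Perm α} (ha : a * a = 1) (hb : b * b = 1)
    (ha' : ∀ x, a x ≠ x) (hb' : ∀ x, b x ≠ x) (x : α) : ¬ (b * a).SameCycle x (a x) := by
  set g := b * a
  have hconj : ∀ (n : ℤ) y, a ((g ^ n) y) = (g ^ (-n)) (a y) := by
    have : SemiconjBy a g g⁻¹ := by
      rw [SemiconjBy, mul_inv_rev, inv_eq_of_mul_eq_one_left ha, inv_eq_of_mul_eq_one_left hb,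
        mul_assoc]
    intro n y
    rw [← mul_apply, (this.zpow_right n).eq, mul_apply, inv_zpow, zpow_neg]
  have hshift : ∀ m n : ℤ, (g ^ m) ((g ^ n) x) = (g ^ (m + n)) x := fun m n => by
    rw [zpow_add, mul_apply]
  rintro ⟨k, hk⟩
  obtain ⟨m, rfl | rfl⟩ := Int.even_or_odd' k
  · apply ha' ((g ^ m) x)
    rw [hconj, ← hk, hshift]
    congr 2; ring
  · apply hb' (a ((g ^ m) x))
    have : a ((g ^ m) x) = g ((g ^ m) x) := by
      rw [hconj, ← hk, hshift, ← mul_apply, ← zpow_one_add]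
      congr 2; ring
    exact this.symm

theorem exists_coloring_of_involutions {a b : Perm α} (ha : a * a = 1) (hb : b * b = 1)
    (ha' : ∀ x, a x ≠ x) (hb' : ∀ x, b x ≠ x) :
    ∃ c : α → Bool, (∀ x, c (a x) = !c x) ∧ ∀ x, c (b x) = !c x := by
  let orbit : α → Quotient (SameCycle.setoid (b * a)) := Quotient.mk _
  let := IsWellOrder.linearOrder (α := Quotient (SameCycle.setoid (b * a))) WellOrderingRel
  have haa : ∀ x, a (a x) = x := fun x => by rw [← mul_apply, ha, one_apply]
  have hbb : ∀ x, b (b x) = x := fun x => by rw [← mul_apply, hb, one_apply]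
  have horbit_ne : ∀ x, orbit x ≠ orbit (a x) := fun x h =>
    not_sameCycle_apply_of_involutions ha hb ha' hb' x (Quotient.exact h)
  have horbit_ab : ∀ x, orbit (a (b x)) = orbit x := fun x =>
    Quotient.sound ⟨1, by rw [zpow_one, mul_apply, haa, hbb]⟩
  have horbit_b : ∀ x, orbit (b x) = orbit (a x) := fun x =>
    (Quotient.sound (⟨1, by rw [zpow_one, mul_apply, haa]⟩ : (b * a).SameCycle (a x) (b x))).symm
  have hflip : ∀ x, decide (orbit (a x) < orbit x) = !decide (orbit x < orbit (a x)) := fun x => by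
    simp only [← decide_not, not_lt, (horbit_ne x).symm.le_iff_lt]
  -- Colour `x` by comparing its `b * a`-cycle with that of `a x` in a well-order of the cycles.
  refine ⟨fun x => decide (orbit x < orbit (a x)), fun x => ?_, fun x => ?_⟩
  · dsimp only
    rw [haa, hflip]
  · dsimp only
    rw [horbit_ab, horbit_b, hflip]

end Equiv.Perm

namespace Benes

open Equiv Equiv.Perm

variable {α : Type*}

def switch (s : α → Bool) : Perm (Bool × α) where
  toFun x := (xor (s x.2) x.1, x.2)
  invFun x := (xor (s x.2) x.1, x.2)
  left_inv x := by simp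
  right_inv x := by simp

@[simp]
theorem switch_apply (s : α → Bool) (x : Bool × α) : switch s x = (xor (s x.2) x.1, x.2) := rfl

@[simp]
theorem switch_mul_self (s : α → Bool) : switch s * switch s = 1 := by
  ext x <;> simp

theorem switch_true_apply_ne (x : Bool × α) : switch (fun _ => true) x ≠ x := by
  simp [Prod.ext_iff]

theorem exists_switch_eq {c : Bool × α → Bool}
    (hc : ∀ x, c (switch (fun _ => true) x) = !c x) : ∃ s, ∀ x, switch s x = (c x, x.2) := by
  refine ⟨fun i => c (false, i), ?_⟩
  rintro ⟨_ | _, i⟩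
  · simp
  · simpa using (hc (false, i)).symm

def middle {β : Type*} (σ : β → Perm α) : Perm (β × α) := prodShear (Equiv.refl β) σ

@[simp]
theorem middle_apply {β : Type*} (σ : β → Perm α) (x : β × α) : middle σ x = (x.1, σ x.1 x.2) :=
  rfl

theorem exists_middle_eq {β : Type*} {F : Perm (β × α)} (hF : ∀ x, (F x).1 = x.1) :
    ∃ σ : β → Perm α, middle σ = F := by
  have hF' : ∀ x, (F⁻¹ x).1 = x.1 := fun x => by
    conv_rhs => rw [← F.apply_symm_apply x]
    exact (hF _).symm
  have hF_mk : ∀ x, ((x.1, (F x).2) : β × α) = F x := fun x => Prod.ext (hF x).symm rfl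
  have hF'_mk : ∀ x, ((x.1, (F⁻¹ x).2) : β × α) = F⁻¹ x := fun x => Prod.ext (hF' x).symm rfl
  refine ⟨fun b => ⟨fun i => (F (b, i)).2, fun i => (F⁻¹ (b, i)).2, fun i => ?_, fun i => ?_⟩, ?_⟩
  · simp only
    rw [hF_mk (b, i), coe_inv, symm_apply_apply]
  · simp only
    rw [hF'_mk (b, i), coe_inv, apply_symm_apply]
  · ext x : 1
    exact hF_mk x

theorem exists_eq_switch_mul_middle_mul_switch (π : Perm (Bool × α)) :
    ∃ (sIn sOut : α → Bool) (σ : Bool → Perm α), π = switch sIn * middle σ * switch sOut := by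
  set p := switch (fun _ : α => true)
  set q := π⁻¹ * p * π
  have hq : q * q = 1 := by
    rw [show q * q = π⁻¹ * (p * p) * π by simp only [q]; group, switch_mul_self]
    group
  have hq' : ∀ x, q x ≠ x := fun x h =>
    switch_true_apply_ne (π x) (by rwa [mul_apply, mul_apply, inv_eq_iff_eq] at h)
  obtain ⟨c, hcp, hcq⟩ :=
    exists_coloring_of_involutions (switch_mul_self _) hq switch_true_apply_ne hq'
  obtain ⟨sOut, hOut⟩ := exists_switch_eq hcp
  obtain ⟨sIn, hIn⟩ := exists_switch_eq (c := fun z => c (π⁻¹ z)) fun z => by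
    simpa [p, q] using hcq (π⁻¹ z)
  have hF : ∀ x, ((switch sIn * π * switch sOut) x).1 = x.1 := fun x =>
    calc ((switch sIn * π * switch sOut) x).1 = c (π⁻¹ (π (switch sOut x))) := by
          rw [mul_apply, mul_apply, hIn]
      _ = (switch sOut (switch sOut x)).1 := by
          rw [coe_inv, symm_apply_apply, hOut (switch sOut x)]
      _ = x.1 := by rw [← mul_apply, switch_mul_self, one_apply]
  obtain ⟨σ, hσ⟩ := exists_middle_eq hF
  refine ⟨sIn, sOut, σ, ?_⟩
  rw [hσ, ← mul_assoc, ← mul_assoc, switch_mul_self, one_mul, mul_assoc, switch_mul_self,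
    mul_one]

def halvesEquiv (N : ℕ) : Bool × Fin N ≃ Fin (2 * N) :=
  ((boolProdEquivSum _).trans finSumFinEquiv).trans (finCongr (two_mul N).symm)

@[simp]
theorem halvesEquiv_false_val (N : ℕ) (i : Fin N) : (halvesEquiv N (false, i)).val = i := rfl

@[simp]
theorem halvesEquiv_true_val (N : ℕ) (i : Fin N) : (halvesEquiv N (true, i)).val = i + N :=
  Nat.add_comm _ _

theorem switchLayer_halvesEquiv (N : ℕ) (s : Fin N → Bool) (x : Bool × Fin N) :
    switchLayer N s (halvesEquiv N x) = halvesEquiv N (switch s x) := by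
  obtain ⟨_ | _, i⟩ := x <;> cases h : s i <;> simp [switchLayer, h, Fin.ext_iff]

theorem middleLayer_halvesEquiv (N : ℕ) (σ : Bool → Perm (Fin N)) (x : Bool × Fin N) :
    middleLayer N (σ false) (σ true) (halvesEquiv N x) = halvesEquiv N (middle σ x) := by
  obtain ⟨_ | _, i⟩ := x <;> simp [middleLayer, Fin.ext_iff]

end Benes

theorem benes_rearrangeable_general (N : ℕ)
    (π : Equiv.Perm (Fin (2 * N))) :
    ∃ (sIn sOut : Fin N → Bool) (σ₀ σ₁ : Equiv.Perm (Fin N)),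
      ∀ x : Fin (2 * N),
        π x = switchLayer N sIn (middleLayer N σ₀ σ₁ (switchLayer N sOut x)) := by
  obtain ⟨sIn, sOut, σ, hπ⟩ :=
    Benes.exists_eq_switch_mul_middle_mul_switch ((Benes.halvesEquiv N).symm.permCongr π)
  refine ⟨sIn, sOut, σ false, σ true, fun x => ?_⟩
  obtain ⟨y, rfl⟩ := (Benes.halvesEquiv N).surjective x
  rw [Benes.switchLayer_halvesEquiv, Benes.middleLayer_halvesEquiv, Benes.switchLayer_halvesEquiv,
    ← Equiv.Perm.mul_apply, ← Equiv.Perm.mul_apply, ← hπ]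
  simp [Equiv.permCongr_apply]

/-- Rearrangeability of the `r`-Benes network: for `r ≥ 1`, every permutation of
`[2^r]` factors as `τ_in ∘ (σ₀ ⊕ σ₁) ∘ τ_out`, where `τ_in, τ_out` come from
`2^(r-1)` independent binary switches pairing `i` with `i + 2^(r-1)`, and
`σ₀, σ₁` are permutations of `[2^(r-1)]` acting on the two halves. -/
theorem benes_rearrangeable (r : ℕ) (hr : 1 ≤ r) (N : ℕ) (hN : 2 * N = 2 ^ r)
    (π : Equiv.Perm (Fin (2 * N))) :
    ∃ (sIn sOut : Fin N → Bool) (σ₀ σ₁ : Equiv.Perm (Fin N)),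
      ∀ x : Fin (2 * N),
        π x = switchLayer N sIn (middleLayer N σ₀ σ₁ (switchLayer N sOut x)) :=
  benes_rearrangeable_general N π
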